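/- arXiv:1502.00056 — 2 statements merged into one kernel-verified Lean document; each statement's English description precedes it below -/
import Mathlib

section
/- For every n ≥ 1, the identity F_n(1/23; q,r,s,t) = (rs)^{C(n,2)} + ∑_{m=1}^{n-1} ∑_{j=1}^{m} (qt)^{j-1} r^{C(m,2)} s^{(n-m)(m-1) + m - j + C(m-1,2)} holds in ℤ[q,r,s,t]. -/
open Finset

/-- `IsRGF w` : `w = a₁⋯aₙ` is a restricted growth function: all letters are
positive, the first letter is `1` and each later letter is at most one more
than the maximum of the preceding prefix. -/
def IsRGF (w : List ℕ) : Prop :=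
  (∀ a ∈ w, 1 ≤ a) ∧
  (0 < w.length → w.getD 0 0 = 1) ∧
  (∀ j : ℕ, j + 1 < w.length →
    w.getD (j + 1) 0 ≤ 1 + (w.take (j + 1)).foldr max 0)

/-- The set partition encoded by the word `w` contains the set-partition
pattern encoded by the word `p`:  there are positions, listed increasingly,
whose "same block" (= same letter) pattern in `w` is exactly that of `p`. -/
def ContainsPat (w p : List ℕ) : Prop :=
  ∃ f : Fin p.length → Fin w.length, StrictMono f ∧
    ∀ a b : Fin p.length, (w.get (f a) = w.get (f b) ↔ p.get a = p.get b)

/-- `Rn n p` : the restricted growth functions of length `n` whose associated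
set partition avoids the pattern (of set partitions) encoded by the RGF `p`.
Via the standard bijection `σ ↦ w(σ)` this is `R_n(π) ≅ Π_n(π)`.
Patterns of `[3]`:  `1/2/3 ↦ [1,2,3]`, `1/23 ↦ [1,2,2]`, `13/2 ↦ [1,2,1]`,
`12/3 ↦ [1,1,2]`, `123 ↦ [1,1,1]`. -/
def Rn (n : ℕ) (p : List ℕ) : Set (List ℕ) :=
  {w | w.length = n ∧ IsRGF w ∧ ¬ ContainsPat w p}

/-- `lb` : sum over positions `j` of the number of distinct values occurring
before position `j` that are bigger than the letter at `j`. -/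
def statLB (w : List ℕ) : ℕ :=
  ∑ j ∈ Finset.range w.length,
    ((w.take j).toFinset.filter (fun v => w.getD j 0 < v)).card

/-- `ls` : left and smaller. -/
def statLS (w : List ℕ) : ℕ :=
  ∑ j ∈ Finset.range w.length,
    ((w.take j).toFinset.filter (fun v => v < w.getD j 0)).card

/-- `rb` : right and bigger. -/
def statRB (w : List ℕ) : ℕ :=
  ∑ j ∈ Finset.range w.length,
    ((w.drop (j + 1)).toFinset.filter (fun v => w.getD j 0 < v)).card

/-- `rs` : right and smaller. -/
def statRS (w : List ℕ) : ℕ :=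
  ∑ j ∈ Finset.range w.length,
    ((w.drop (j + 1)).toFinset.filter (fun v => v < w.getD j 0)).card

/-- The four–variable generating function
`F_n(π;q,r,s,t) = ∑_{σ∈Π_n(π)} q^{lb} r^{ls} s^{rb} t^{rs}`, with
`q = X 0`, `r = X 1`, `s = X 2`, `t = X 3`. -/
noncomputable def Fgen (n : ℕ) (p : List ℕ) : MvPolynomial (Fin 4) ℤ :=
  ∑ᶠ w ∈ Rn n p,
    (MvPolynomial.X 0 : MvPolynomial (Fin 4) ℤ) ^ statLB w *
      MvPolynomial.X 1 ^ statLS w *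
      MvPolynomial.X 2 ^ statRB w *
      MvPolynomial.X 3 ^ statRS w

/-- `LB_n(π;q)`. -/
noncomputable def LBp (n : ℕ) (p : List ℕ) : Polynomial ℤ :=
  ∑ᶠ w ∈ Rn n p, Polynomial.X ^ statLB w

/-- `LS_n(π;q)`. -/
noncomputable def LSp (n : ℕ) (p : List ℕ) : Polynomial ℤ :=
  ∑ᶠ w ∈ Rn n p, Polynomial.X ^ statLS w

/-- `RB_n(π;q)`. -/
noncomputable def RBp (n : ℕ) (p : List ℕ) : Polynomial ℤ :=
  ∑ᶠ w ∈ Rn n p, Polynomial.X ^ statRB w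

/-- `RS_n(π;q)`. -/
noncomputable def RSp (n : ℕ) (p : List ℕ) : Polynomial ℤ :=
  ∑ᶠ w ∈ Rn n p, Polynomial.X ^ statRS w

/-!
If a letter of a restricted growth function repeats later, then avoiding `1/23` forces every
earlier letter to equal it. Hence only the letter `1` repeats, and its occurrences are an initial
segment `[0, a)` together with one more position `q ≥ a`. Every other letter is then the next new
one, so the word is `1^a 2 3 ⋯` with one extra `1` inserted at position `q`. For this word
`lb = rs = q - a`, `ls = C(n - a, 2)` and `rb = a (n - a - 1) + (n - q - 1) + C(n - a - 1, 2)`.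
Putting `m = n - a` and `j = q - a + 1` gives the stated sum, and the word `12⋯n` (`a = q = 0`)
contributes `(rs)^{C(n,2)}`.
-/

namespace List

lemma mem_take_iff_getD {w : List ℕ} {k x : ℕ} :
    x ∈ w.take k ↔ ∃ i < min k w.length, w.getD i 0 = x := by
  simp only [mem_take_iff_getElem]
  constructor
  · rintro ⟨i, hi, rfl⟩
    exact ⟨i, hi, getD_eq_getElem _ _ _⟩
  · rintro ⟨i, hi, rfl⟩
    exact ⟨i, hi, (getD_eq_getElem _ _ _).symm⟩

lemma getD_mem_take_add_one {w : List ℕ} {k : ℕ} (hk : k < w.length) :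
    w.getD k 0 ∈ w.take (k + 1) :=
  mem_take_iff_getD.2 ⟨k, by omega, rfl⟩

lemma foldr_max_eq_max_foldr_max (l : List ℕ) (b : ℕ) :
    l.foldr max b = max b (l.foldr max 0) := by
  induction l with
  | nil => simp
  | cons x l ih => simp only [foldr_cons, ih]; omega

lemma foldr_max_take_add_one (w : List ℕ) {k : ℕ} (hk : k < w.length) :
    (w.take (k + 1)).foldr max 0 = max (w.getD k 0) ((w.take k).foldr max 0) := by
  rw [← take_concat_get' w k hk, foldr_append, foldr_max_eq_max_foldr_max, getD_eq_getElem _ _ hk]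
  simp

end List

namespace IsRGF

variable {w : List ℕ}

lemma one_le_getD (hw : IsRGF w) {k : ℕ} (hk : k < w.length) : 1 ≤ w.getD k 0 := by
  rw [List.getD_eq_getElem _ _ hk]
  exact hw.1 _ (List.getElem_mem hk)

lemma getD_le_foldr_max_add_one (hw : IsRGF w) {k : ℕ} (hk : k < w.length) :
    w.getD k 0 ≤ (w.take k).foldr max 0 + 1 := by
  cases k with
  | zero => rw [hw.2.1 hk]; simp
  | succ j => have := hw.2.2 j hk; omega

lemma mem_take_of_le_foldr_max (hw : IsRGF w) {k v : ℕ} (hk : k ≤ w.length) (hv : 1 ≤ v)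
    (hvk : v ≤ (w.take k).foldr max 0) : v ∈ w.take k := by
  induction k with
  | zero => simp only [List.take_zero, List.foldr_nil] at hvk; omega
  | succ k ih =>
    rw [List.foldr_max_take_add_one w hk] at hvk
    rcases le_or_gt v ((w.take k).foldr max 0) with h | h
    · exact List.take_subset_take_left w (by omega) (ih (by omega) h)
    · have := hw.getD_le_foldr_max_add_one hk
      rw [show v = w.getD k 0 by omega]
      exact List.getD_mem_take_add_one hk

lemma getD_eq_foldr_max_add_one (hw : IsRGF w) {k : ℕ} (hk : k < w.length)
    (hnew : w.getD k 0 ∉ w.take k) : w.getD k 0 = (w.take k).foldr max 0 + 1 := by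
  have h1 := hw.one_le_getD hk
  have h2 := hw.getD_le_foldr_max_add_one hk
  by_contra hne
  exact hnew (hw.mem_take_of_le_foldr_max hk.le h1 (by omega))

lemma ext_of_getD_eq_one_iff {w' : List ℕ} (hw : IsRGF w) (hw' : IsRGF w')
    (hlen : w.length = w'.length)
    (hone : ∀ k < w.length, (w.getD k 0 = 1 ↔ w'.getD k 0 = 1))
    (hnew : ∀ k < w.length, w.getD k 0 ≠ 1 → w.getD k 0 ∉ w.take k)
    (hnew' : ∀ k < w'.length, w'.getD k 0 ≠ 1 → w'.getD k 0 ∉ w'.take k) : w = w' := by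
  suffices h : ∀ k ≤ w.length, w.take k = w'.take k by
    rw [← List.take_length (l := w), h w.length le_rfl, hlen, List.take_length]
  intro k hk
  induction k with
  | zero => simp
  | succ k ih =>
    have htake := ih (by omega)
    have hletter : w.getD k 0 = w'.getD k 0 := by
      by_cases h1 : w.getD k 0 = 1
      · rw [h1, ((hone k (by omega)).1 h1)]
      · have h1' : w'.getD k 0 ≠ 1 := fun h => h1 ((hone k (by omega)).2 h)
        rw [hw.getD_eq_foldr_max_add_one (by omega) (hnew k (by omega) h1),
          hw'.getD_eq_foldr_max_add_one (by omega) (hnew' k (by omega) h1'), htake]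
    rw [← List.take_concat_get' w k (by omega), ← List.take_concat_get' w' k (by omega), htake,
      ← List.getD_eq_getElem _ 0, ← List.getD_eq_getElem _ 0, hletter]

end IsRGF

lemma card_filter_lt_Icc (L U c : ℕ) :
    ((Icc L U).filter (fun v => c < v)).card = U + 1 - max L (c + 1) := by
  rw [show (Icc L U).filter (fun v => c < v) = Finset.Ico (max L (c + 1)) (U + 1) by
    ext; simp only [mem_filter, mem_Icc, Finset.mem_Ico]; omega, Nat.card_Ico]

lemma card_filter_gt_Icc (L U c : ℕ) :
    ((Icc L U).filter (fun v => v < c)).card = min (U + 1) c - L := by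
  rw [show (Icc L U).filter (fun v => v < c) = Finset.Ico L (min (U + 1) c) by
    ext; simp only [mem_filter, mem_Icc, Finset.mem_Ico]; omega, Nat.card_Ico]

lemma choose_two_succ_add_choose_two (k : ℕ) : (k + 1).choose 2 + k.choose 2 = k * k := by
  induction k with
  | zero => simp
  | succ k ih =>
    rw [Nat.choose_succ_succ' (k + 1), Nat.choose_succ_succ' k 1, Nat.choose_one_right,
      Nat.choose_one_right] at *
    nlinarith

lemma sum_range_eq_choose_two (m : ℕ) : ∑ i ∈ range m, i = m.choose 2 := by
  rw [sum_range_id, Nat.choose_two_right]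

lemma containsPat_122_iff (w : List ℕ) :
    ContainsPat w [1, 2, 2] ↔ ∃ i j k, i < j ∧ j < k ∧ k < w.length ∧
      w.getD j 0 = w.getD k 0 ∧ w.getD i 0 ≠ w.getD j 0 := by
  constructor
  · rintro ⟨f, hf, hpat⟩
    have h01 : f 0 < f 1 := hf (by decide)
    have h12 : f 1 < f 2 := hf (by decide)
    refine ⟨f 0, f 1, f 2, h01, h12, (f 2).2, ?_, ?_⟩
    · simpa [List.getD_eq_getElem] using (hpat 1 2).2 rfl
    · simpa [List.getD_eq_getElem] using mt (hpat 0 1).1 (by decide)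
  · rintro ⟨i, j, k, hij, hjk, hk, hjk_eq, hij_ne⟩
    rw [List.getD_eq_getElem _ _ (by omega), List.getD_eq_getElem _ _ hk] at hjk_eq
    rw [List.getD_eq_getElem _ _ (by omega), List.getD_eq_getElem _ _ (by omega), hjk_eq] at hij_ne
    refine ⟨![⟨i, by omega⟩, ⟨j, by omega⟩, ⟨k, hk⟩], ?_, ?_⟩
    · refine Fin.strictMono_iff_lt_succ.2 fun x => ?_
      fin_cases x <;> simpa [Fin.lt_def]
    · intro x y
      fin_cases x <;> fin_cases y <;> simp [hjk_eq, hij_ne, Ne.symm hij_ne]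

section Avoiding

variable {w : List ℕ}

lemma getD_eq_of_not_containsPat_122 (hav : ¬ContainsPat w [1, 2, 2]) {i j k : ℕ} (hij : i < j)
    (hjk : j < k) (hk : k < w.length) (h : w.getD j 0 = w.getD k 0) :
    w.getD i 0 = w.getD j 0 := by
  by_contra hne
  exact hav ((containsPat_122_iff w).2 ⟨i, j, k, hij, hjk, hk, h, hne⟩)

lemma getD_notMem_take_of_not_containsPat_122 (hw : IsRGF w) (hav : ¬ContainsPat w [1, 2, 2])
    {k : ℕ} (hk : k < w.length) (h1 : w.getD k 0 ≠ 1) : w.getD k 0 ∉ w.take k := by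
  intro hmem
  obtain ⟨i, hi, hwi⟩ := List.mem_take_iff_getD.1 hmem
  have hw0 : w.getD 0 0 = 1 := hw.2.1 (by omega)
  apply h1
  rcases Nat.eq_zero_or_pos i with rfl | hi0
  · rw [← hwi, hw0]
  · rw [← hwi, ← getD_eq_of_not_containsPat_122 hav hi0 (by omega) hk hwi, hw0]

lemma exists_getD_eq_one_iff_of_not_containsPat_122 (hw : IsRGF w)
    (hav : ¬ContainsPat w [1, 2, 2]) (hlen : 0 < w.length) :
    ∃ a q, a ≤ q ∧ q < w.length ∧ (0 < q → 0 < a) ∧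
      ∀ i < w.length, (w.getD i 0 = 1 ↔ i < a ∨ i = q) := by
  have hw0 : w.getD 0 0 = 1 := hw.2.1 hlen
  set q := Nat.findGreatest (fun i => w.getD i 0 = 1) w.length
  have hq : w.getD q 0 = 1 :=
    Nat.findGreatest_spec (P := fun i => w.getD i 0 = 1) (Nat.zero_le _) hw0
  have hqlen : q < w.length := by
    by_contra h
    rw [List.getD_eq_default _ _ (by omega)] at hq
    omega
  have hexists : ∃ i, i = q ∨ w.getD i 0 ≠ 1 := ⟨q, Or.inl rfl⟩
  set a := Nat.find hexists
  have haq : a ≤ q := Nat.find_min' hexists (Or.inl rfl)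
  have ha : a = q ∨ w.getD a 0 ≠ 1 := Nat.find_spec hexists
  have hlt_a : ∀ i < a, w.getD i 0 = 1 := fun i hi => by
    simpa using (not_or.1 (Nat.find_min hexists hi)).2
  refine ⟨a, q, haq, hqlen, fun hq0 => Nat.pos_of_ne_zero fun ha0 => ?_,
    fun i hi => ⟨?_, ?_⟩⟩
  · rw [ha0] at ha
    omega
  · intro hi1
    have hiq : i ≤ q := Nat.le_findGreatest hi.le hi1
    by_contra hne
    have hai : a ≤ i := by omega
    have hwa : w.getD a 0 = 1 := by
      rcases hai.eq_or_lt with rfl | hlt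
      · exact hi1
      · rw [getD_eq_of_not_containsPat_122 hav hlt (by omega) hqlen (hi1.trans hq.symm), hi1]
    omega
  · rintro (hia | rfl)
    · exact hlt_a i hia
    · exact hq

end Avoiding

/-- Letter `i` (counting from `0`) of the word `1^a 2 3 ⋯` into which one more `1` is inserted at
position `q`. -/
def avoidingLetter (a q i : ℕ) : ℕ :=
  if i < a ∨ i = q then 1 else if i < q then i - a + 2 else i - a + 1

def avoidingWord (n a q : ℕ) : List ℕ := (List.range n).map (avoidingLetter a q)

section AvoidingWord

variable {n a q : ℕ}

@[simp]
lemma length_avoidingWord : (avoidingWord n a q).length = n := by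
  simp [avoidingWord]

lemma getD_avoidingWord {i : ℕ} (hi : i < n) :
    (avoidingWord n a q).getD i 0 = avoidingLetter a q i := by
  simp [avoidingWord, hi]

lemma mem_toFinset_take_avoidingWord {k v : ℕ} :
    v ∈ ((avoidingWord n a q).take k).toFinset ↔ ∃ i < min k n, avoidingLetter a q i = v := by
  simp [avoidingWord, ← List.map_take, List.take_range]

lemma mem_toFinset_drop_avoidingWord {k v : ℕ} :
    v ∈ ((avoidingWord n a q).drop k).toFinset ↔
      ∃ i, k ≤ i ∧ i < n ∧ avoidingLetter a q i = v := by
  simp only [avoidingWord, ← List.map_drop, List.range_eq_range', List.drop_range',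
    List.mem_toFinset, List.mem_map, List.mem_range'_1]
  exact exists_congr fun i => by omega

lemma avoidingLetter_zero (hq0 : 0 < q → 0 < a) : avoidingLetter a q 0 = 1 := by
  unfold avoidingLetter
  split_ifs <;> omega

lemma toFinset_take_avoidingWord_of_le (haq : a ≤ q) (hqn : q < n) (hq0 : 0 < q → 0 < a)
    {k : ℕ} (hk : 0 < k) (hkq : k ≤ q) :
    ((avoidingWord n a q).take k).toFinset = Icc 1 (k - a + 1) := by
  ext v
  rw [mem_toFinset_take_avoidingWord, mem_Icc]
  constructor
  · rintro ⟨i, hi, rfl⟩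
    unfold avoidingLetter
    split_ifs <;> omega
  · rintro ⟨hv1, hv⟩
    rcases hv1.eq_or_lt with rfl | hv1
    · exact ⟨0, by omega, avoidingLetter_zero hq0⟩
    · refine ⟨a + v - 2, by omega, ?_⟩
      unfold avoidingLetter
      split_ifs <;> omega

lemma toFinset_take_avoidingWord_of_lt (haq : a ≤ q) (hq0 : 0 < q → 0 < a) {k : ℕ}
    (hqk : q < k) (hkn : k ≤ n) :
    ((avoidingWord n a q).take k).toFinset = Icc 1 (k - a) := by
  ext v
  rw [mem_toFinset_take_avoidingWord, mem_Icc]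
  constructor
  · rintro ⟨i, hi, rfl⟩
    unfold avoidingLetter
    split_ifs <;> omega
  · rintro ⟨hv1, hv⟩
    rcases hv1.eq_or_lt with rfl | hv1
    · exact ⟨0, by omega, avoidingLetter_zero hq0⟩
    · refine ⟨if v ≤ q - a + 1 then a + v - 2 else a + v - 1, by split_ifs <;> omega, ?_⟩
      unfold avoidingLetter
      split_ifs <;> omega

lemma toFinset_drop_avoidingWord_of_lt (hqn : q < n) {i : ℕ} (hiq : i < q) :
    ((avoidingWord n a q).drop (i + 1)).toFinset = insert 1 (Icc (i + 1 - a + 2) (n - a)) := by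
  ext v
  rw [mem_toFinset_drop_avoidingWord, mem_insert, mem_Icc]
  constructor
  · rintro ⟨k, hk, hkn, rfl⟩
    unfold avoidingLetter
    split_ifs <;> omega
  · rintro (rfl | ⟨hv1, hv⟩)
    · exact ⟨q, by omega, hqn, by simp [avoidingLetter]⟩
    · refine ⟨if v ≤ q - a + 1 then a + v - 2 else a + v - 1, by split_ifs <;> omega,
        by split_ifs <;> omega, ?_⟩
      unfold avoidingLetter
      split_ifs <;> omega

lemma toFinset_drop_avoidingWord_of_le (haq : a ≤ q) {i : ℕ} (hqi : q ≤ i) :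
    ((avoidingWord n a q).drop (i + 1)).toFinset = Icc (i - a + 2) (n - a) := by
  ext v
  rw [mem_toFinset_drop_avoidingWord, mem_Icc]
  constructor
  · rintro ⟨k, hk, hkn, rfl⟩
    unfold avoidingLetter
    split_ifs <;> omega
  · rintro ⟨hv1, hv⟩
    refine ⟨a + v - 1, by omega, by omega, ?_⟩
    unfold avoidingLetter
    split_ifs <;> omega

lemma avoidingLetter_eq_one_iff (haq : a ≤ q) {i : ℕ} :
    avoidingLetter a q i = 1 ↔ i < a ∨ i = q := by
  unfold avoidingLetter
  split_ifs <;> omega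

lemma getD_avoidingWord_notMem_take {k : ℕ} (hk : k < n)
    (h1 : (avoidingWord n a q).getD k 0 ≠ 1) :
    (avoidingWord n a q).getD k 0 ∉ (avoidingWord n a q).take k := by
  rw [← List.mem_toFinset, mem_toFinset_take_avoidingWord, getD_avoidingWord hk]
  rw [getD_avoidingWord hk] at h1
  rintro ⟨i, hi, heq⟩
  unfold avoidingLetter at heq h1
  split_ifs at heq h1 <;> omega

lemma isRGF_avoidingWord (haq : a ≤ q) (hqn : q < n) (hq0 : 0 < q → 0 < a) :
    IsRGF (avoidingWord n a q) := by
  refine ⟨?_, fun hn => ?_, fun j hj => ?_⟩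
  · simp only [avoidingWord, List.mem_map, List.mem_range]
    rintro _ ⟨i, -, rfl⟩
    unfold avoidingLetter
    split_ifs <;> omega
  · rw [getD_avoidingWord (by simpa using hn), avoidingLetter_zero hq0]
  · rw [length_avoidingWord] at hj
    obtain ⟨c, hset, hc1, hletter⟩ : ∃ c,
        ((avoidingWord n a q).take (j + 1)).toFinset = Icc 1 c ∧
          1 ≤ c ∧ avoidingLetter a q (j + 1) ≤ c + 1 := by
      by_cases h : j + 1 ≤ q
      · refine ⟨j + 1 - a + 1, toFinset_take_avoidingWord_of_le haq hqn hq0 (by omega) h,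
          by omega, ?_⟩
        unfold avoidingLetter
        split_ifs <;> omega
      · refine ⟨j + 1 - a, toFinset_take_avoidingWord_of_lt haq hq0 (by omega) hj.le,
          by omega, ?_⟩
        unfold avoidingLetter
        split_ifs <;> omega
    have hc : c ≤ ((avoidingWord n a q).take (j + 1)).foldr max 0 :=
      List.le_max_of_le (List.mem_toFinset.1 (hset ▸ mem_Icc.2 ⟨hc1, le_rfl⟩)) le_rfl
    rw [getD_avoidingWord hj]
    omega

lemma not_containsPat_avoidingWord : ¬ContainsPat (avoidingWord n a q) [1, 2, 2] := by
  rw [containsPat_122_iff]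
  rintro ⟨i, j, k, hij, hjk, hk, heq, hne⟩
  rw [length_avoidingWord] at hk
  rw [getD_avoidingWord (by omega), getD_avoidingWord hk] at heq
  rw [getD_avoidingWord (by omega), getD_avoidingWord (by omega)] at hne
  unfold avoidingLetter at heq hne
  split_ifs at heq hne <;> omega

lemma avoidingWord_mem_Rn (haq : a ≤ q) (hqn : q < n) (hq0 : 0 < q → 0 < a) :
    avoidingWord n a q ∈ Rn n [1, 2, 2] :=
  ⟨length_avoidingWord, isRGF_avoidingWord haq hqn hq0, not_containsPat_avoidingWord⟩

lemma avoidingWord_inj {a' q' : ℕ} (haq : a ≤ q) (hqn : q < n) (haq' : a' ≤ q')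
    (hqn' : q' < n) (h : avoidingWord n a q = avoidingWord n a' q') : a = a' ∧ q = q' := by
  have hletter : ∀ i < n, avoidingLetter a q i = avoidingLetter a' q' i := fun i hi => by
    rw [← getD_avoidingWord hi, h, getD_avoidingWord hi]
  have hone : ∀ i < n, (i < a ∨ i = q ↔ i < a' ∨ i = q') := fun i hi => by
    rw [← avoidingLetter_eq_one_iff haq, ← avoidingLetter_eq_one_iff haq', hletter i hi]
  have := hone q hqn
  have := hone q' hqn'
  have := hone a (by omega)
  have := hone a' (by omega)
  omega

end AvoidingWord

lemma exists_eq_avoidingWord {n : ℕ} (hn : 1 ≤ n) {w : List ℕ} (hw : w ∈ Rn n [1, 2, 2]) :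
    ∃ a q, a ≤ q ∧ q < n ∧ (0 < q → 0 < a) ∧ w = avoidingWord n a q := by
  obtain ⟨rfl, hrgf, hav⟩ := hw
  obtain ⟨a, q, haq, hqn, hq0, hone⟩ :=
    exists_getD_eq_one_iff_of_not_containsPat_122 hrgf hav hn
  refine ⟨a, q, haq, hqn, hq0, hrgf.ext_of_getD_eq_one_iff (isRGF_avoidingWord haq hqn hq0)
    length_avoidingWord.symm (fun k hk => ?_)
    (fun k hk => getD_notMem_take_of_not_containsPat_122 hrgf hav hk)
    (fun k hk => getD_avoidingWord_notMem_take (by simpa using hk))⟩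
  rw [hone k hk, getD_avoidingWord hk, avoidingLetter_eq_one_iff haq]

section Statistics

variable {n a q : ℕ}

lemma sum_avoidingLetter_sub_one (haq : a ≤ q) (hqn : q < n) :
    ∑ i ∈ range n, (avoidingLetter a q i - 1) = (n - a).choose 2 := by
  have h1 : ∑ i ∈ range a, (avoidingLetter a q i - 1) = 0 :=
    sum_eq_zero fun i hi => by simp [avoidingLetter, mem_range.1 hi]
  have h2 : ∀ k ∈ range (q - a), avoidingLetter a q (a + k) - 1 = k + 1 := fun k hk => by
    simp only [mem_range] at hk
    unfold avoidingLetter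
    split_ifs <;> omega
  have h3 : ∀ k ∈ range (n - q - 1),
      avoidingLetter a q (a + (q - a + (1 + k))) - 1 = q - a + 1 + k := fun k hk => by
    unfold avoidingLetter
    split_ifs <;> omega
  have h4 : avoidingLetter a q (a + (q - a + 0)) - 1 = 0 := by
    simp [avoidingLetter, show a + (q - a) = q by omega]
  calc ∑ i ∈ range n, (avoidingLetter a q i - 1)
      = ∑ i ∈ range (a + (q - a + (1 + (n - q - 1)))), (avoidingLetter a q i - 1) := by
        rw [show a + (q - a + (1 + (n - q - 1))) = n by omega]
    _ = ∑ k ∈ range (q - a), (k + 1) + ∑ k ∈ range (n - q - 1), (q - a + 1 + k) := by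
        rw [sum_range_add, sum_range_add, sum_range_add, sum_range_one, h1, sum_congr rfl h2,
          sum_congr rfl h3, h4]
        simp only [zero_add, add_assoc]
    _ = ∑ i ∈ range (q - a + 1 + (n - q - 1)), i := by
        rw [sum_range_add, Finset.sum_range_succ']
        simp only [add_zero]
    _ = (n - a).choose 2 := by
        rw [sum_range_eq_choose_two, show q - a + 1 + (n - q - 1) = n - a by omega]

lemma statLB_term_avoidingWord (haq : a ≤ q) (hqn : q < n) (hq0 : 0 < q → 0 < a) {i : ℕ}
    (hi : i < n) :
    (((avoidingWord n a q).take i).toFinset.filter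
      (fun v => (avoidingWord n a q).getD i 0 < v)).card = if i = q then q - a else 0 := by
  rw [getD_avoidingWord hi]
  rcases Nat.eq_zero_or_pos i with rfl | hi0
  · simp only [List.take_zero, List.toFinset_nil, filter_empty, card_empty]
    split_ifs <;> omega
  rcases le_or_gt i q with hiq | hiq
  · rw [toFinset_take_avoidingWord_of_le haq hqn hq0 hi0 hiq, card_filter_lt_Icc]
    unfold avoidingLetter
    split_ifs <;> omega
  · rw [toFinset_take_avoidingWord_of_lt haq hq0 hiq hi.le, card_filter_lt_Icc]
    unfold avoidingLetter
    split_ifs <;> omega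

lemma statLS_term_avoidingWord (haq : a ≤ q) (hqn : q < n) (hq0 : 0 < q → 0 < a) {i : ℕ}
    (hi : i < n) :
    (((avoidingWord n a q).take i).toFinset.filter
      (fun v => v < (avoidingWord n a q).getD i 0)).card = avoidingLetter a q i - 1 := by
  rw [getD_avoidingWord hi]
  rcases Nat.eq_zero_or_pos i with rfl | hi0
  · simp [avoidingLetter_zero hq0]
  rcases le_or_gt i q with hiq | hiq
  · rw [toFinset_take_avoidingWord_of_le haq hqn hq0 hi0 hiq, card_filter_gt_Icc]
    unfold avoidingLetter
    split_ifs <;> omega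
  · rw [toFinset_take_avoidingWord_of_lt haq hq0 hiq hi.le, card_filter_gt_Icc]
    unfold avoidingLetter
    split_ifs <;> omega

lemma statRB_term_avoidingWord (haq : a ≤ q) (hqn : q < n) {i : ℕ} (hi : i < n) :
    (((avoidingWord n a q).drop (i + 1)).toFinset.filter
      (fun v => (avoidingWord n a q).getD i 0 < v)).card =
      if i = q then n - q - 1 else n - a - avoidingLetter a q i := by
  rw [getD_avoidingWord hi]
  rcases lt_or_ge i q with hiq | hiq
  · rw [toFinset_drop_avoidingWord_of_lt hqn hiq, filter_insert,
      if_neg (by unfold avoidingLetter; split_ifs <;> omega), card_filter_lt_Icc]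
    unfold avoidingLetter
    split_ifs <;> omega
  · rw [toFinset_drop_avoidingWord_of_le haq hiq, card_filter_lt_Icc]
    unfold avoidingLetter
    split_ifs <;> omega

lemma statRS_term_avoidingWord (haq : a ≤ q) (hqn : q < n) {i : ℕ} (hi : i < n) :
    (((avoidingWord n a q).drop (i + 1)).toFinset.filter
      (fun v => v < (avoidingWord n a q).getD i 0)).card = if a ≤ i ∧ i < q then 1 else 0 := by
  rw [getD_avoidingWord hi]
  rcases lt_or_ge i q with hiq | hiq
  · rw [toFinset_drop_avoidingWord_of_lt hqn hiq, filter_insert]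
    by_cases hai : a ≤ i
    · rw [if_pos (by unfold avoidingLetter; split_ifs <;> omega),
        card_insert_of_notMem (by simp only [mem_filter, mem_Icc]; omega), card_filter_gt_Icc,
        if_pos ⟨hai, hiq⟩]
      unfold avoidingLetter
      split_ifs <;> omega
    · rw [if_neg (by unfold avoidingLetter; split_ifs <;> omega), card_filter_gt_Icc,
        if_neg (by omega)]
      unfold avoidingLetter
      split_ifs <;> omega
  · rw [toFinset_drop_avoidingWord_of_le haq hiq, card_filter_gt_Icc]
    unfold avoidingLetter
    split_ifs <;> omega

lemma statLB_avoidingWord (haq : a ≤ q) (hqn : q < n) (hq0 : 0 < q → 0 < a) :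
    statLB (avoidingWord n a q) = q - a := by
  rw [statLB, length_avoidingWord,
    sum_congr rfl fun i hi => statLB_term_avoidingWord haq hqn hq0 (mem_range.1 hi),
    sum_ite_eq', if_pos (mem_range.2 hqn)]

lemma statLS_avoidingWord (haq : a ≤ q) (hqn : q < n) (hq0 : 0 < q → 0 < a) :
    statLS (avoidingWord n a q) = (n - a).choose 2 := by
  rw [statLS, length_avoidingWord,
    sum_congr rfl fun i hi => statLS_term_avoidingWord haq hqn hq0 (mem_range.1 hi),
    sum_avoidingLetter_sub_one haq hqn]

lemma statRS_avoidingWord (haq : a ≤ q) (hqn : q < n) :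
    statRS (avoidingWord n a q) = q - a := by
  rw [statRS, length_avoidingWord,
    sum_congr rfl fun i hi => statRS_term_avoidingWord haq hqn (mem_range.1 hi), sum_boole,
    show (range n).filter (fun i => a ≤ i ∧ i < q) = Ico a q by
      ext; simp only [mem_filter, mem_range, Finset.mem_Ico]; omega,
    Nat.card_Ico, Nat.cast_id]

/-- At each position, each of the other `n - a - 1` letters is counted by exactly one of `lb`,
`ls` and `rb`. -/
lemma statLB_add_statLS_add_statRB_avoidingWord (haq : a ≤ q) (hqn : q < n)
    (hq0 : 0 < q → 0 < a) :
    statLB (avoidingWord n a q) + statLS (avoidingWord n a q) + statRB (avoidingWord n a q) =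
      n * (n - a - 1) := by
  simp only [statLB, statLS, statRB, length_avoidingWord, ← sum_add_distrib]
  rw [sum_congr rfl fun i hi => ?_, sum_const, card_range, smul_eq_mul]
  have hi := mem_range.1 hi
  rw [statLB_term_avoidingWord haq hqn hq0 hi, statLS_term_avoidingWord haq hqn hq0 hi,
    statRB_term_avoidingWord haq hqn hi]
  unfold avoidingLetter
  split_ifs <;> omega

lemma statRB_avoidingWord (haq : a ≤ q) (hqn : q < n) (hq0 : 0 < q → 0 < a) :
    statRB (avoidingWord n a q) = a * (n - a - 1) + (n - q - 1) + (n - a - 1).choose 2 := by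
  have hsum := statLB_add_statLS_add_statRB_avoidingWord haq hqn hq0
  rw [statLB_avoidingWord haq hqn hq0, statLS_avoidingWord haq hqn hq0] at hsum
  obtain ⟨k, hk⟩ : ∃ k, n - a = k + 1 := ⟨n - a - 1, by omega⟩
  have hnk : n * (n - a - 1) = a * k + k * k + k := by
    rw [show n = a + k + 1 by omega, show a + k + 1 - a - 1 = k by omega]
    ring
  have := choose_two_succ_add_choose_two k
  rw [hnk, hk] at hsum
  rw [show n - a - 1 = k by omega]
  omega

end Statistics

def admissiblePairs (n : ℕ) : Finset (ℕ × ℕ) :=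
  (range n ×ˢ range n).filter fun p => p.1 ≤ p.2 ∧ (0 < p.2 → 0 < p.1)

lemma mem_admissiblePairs {n : ℕ} {p : ℕ × ℕ} :
    p ∈ admissiblePairs n ↔ p.1 ≤ p.2 ∧ p.2 < n ∧ (0 < p.2 → 0 < p.1) := by
  simp only [admissiblePairs, mem_filter, mem_product, mem_range]
  omega

lemma Rn_122_eq_image {n : ℕ} (hn : 1 ≤ n) :
    Rn n [1, 2, 2] =
      ((admissiblePairs n).image fun p => avoidingWord n p.1 p.2 : Set (List ℕ)) := by
  ext w
  simp only [coe_image, Set.mem_image, mem_coe, mem_admissiblePairs, Prod.exists]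
  constructor
  · intro hw
    obtain ⟨a, q, haq, hqn, hq0, rfl⟩ := exists_eq_avoidingWord hn hw
    exact ⟨a, q, ⟨haq, hqn, hq0⟩, rfl⟩
  · rintro ⟨a, q, ⟨haq, hqn, hq0⟩, rfl⟩
    exact avoidingWord_mem_Rn haq hqn hq0

open MvPolynomial in
lemma Fgen_122_eq_sum {n : ℕ} (hn : 1 ≤ n) :
    Fgen n [1, 2, 2] = ∑ p ∈ admissiblePairs n,
      (X 0 : MvPolynomial (Fin 4) ℤ) ^ (p.2 - p.1) * X 1 ^ (n - p.1).choose 2 *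
        X 2 ^ (p.1 * (n - p.1 - 1) + (n - p.2 - 1) + (n - p.1 - 1).choose 2) *
        X 3 ^ (p.2 - p.1) := by
  rw [Fgen, Rn_122_eq_image hn, finsum_mem_coe_finset, sum_image fun p hp p' hp' h => ?_]
  · refine sum_congr rfl fun p hp => ?_
    obtain ⟨haq, hqn, hq0⟩ := mem_admissiblePairs.1 hp
    rw [statLB_avoidingWord haq hqn hq0, statLS_avoidingWord haq hqn hq0,
      statRB_avoidingWord haq hqn hq0, statRS_avoidingWord haq hqn]
  · obtain ⟨haq, hqn, -⟩ := mem_admissiblePairs.1 hp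
    obtain ⟨haq', hqn', -⟩ := mem_admissiblePairs.1 hp'
    obtain ⟨ha, hq⟩ := avoidingWord_inj haq hqn haq' hqn' h
    exact Prod.ext ha hq

lemma sum_admissiblePairs {M : Type*} [AddCommMonoid M] (g : ℕ × ℕ → M) {n : ℕ}
    (hn : 1 ≤ n) :
    ∑ p ∈ admissiblePairs n, g p =
      g (0, 0) + ∑ m ∈ Icc 1 (n - 1), ∑ j ∈ Icc 1 m, g (n - m, n - m + j - 1) := by
  have hsplit : admissiblePairs n = insert (0, 0) ((admissiblePairs n).filter (0 < ·.1)) := by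
    ext ⟨a, q⟩
    simp only [mem_insert, mem_filter, mem_admissiblePairs, Prod.mk.injEq]
    omega
  rw [hsplit, sum_insert (by simp), sum_sigma']
  congr 1
  refine sum_nbij' (fun p => ⟨n - p.1, p.2 - p.1 + 1⟩) (fun s => (n - s.1, n - s.1 + s.2 - 1))
    ?_ ?_ ?_ ?_ ?_
  all_goals simp only [mem_filter, mem_admissiblePairs, mem_sigma, mem_Icc, Prod.forall,
    Sigma.forall]
  · omega
  · omega
  · intro a q h
    exact Prod.ext (by dsimp only; omega) (by dsimp only; omega)
  · intro m j h
    exact Sigma.ext (by dsimp only; omega) (heq_of_eq (by dsimp only; omega))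
  · intro a q h
    rw [show n - (n - a) = a by omega, show a + (q - a + 1) - 1 = q by omega]

open MvPolynomial in
/-- the four-variable generating function for `1/23`. -/
theorem stmt9 (n : ℕ) (hn : 1 ≤ n) :
    Fgen n [1, 2, 2] =
      (X 1 * X 2 : MvPolynomial (Fin 4) ℤ) ^ n.choose 2 +
        ∑ m ∈ Finset.Icc 1 (n - 1), ∑ j ∈ Finset.Icc 1 m,
          (X 0 * X 3 : MvPolynomial (Fin 4) ℤ) ^ (j - 1) *
            X 1 ^ m.choose 2 *
            X 2 ^ ((n - m) * (m - 1) + (m - j) + (m - 1).choose 2) := by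
  rw [Fgen_122_eq_sum hn, sum_admissiblePairs _ hn]
  congr 1
  · have hchoose : n - 1 + (n - 1).choose 2 = n.choose 2 := by
      obtain ⟨k, rfl⟩ : ∃ k, n = k + 1 := ⟨n - 1, by omega⟩
      rw [Nat.choose_succ_succ', Nat.choose_one_right, Nat.add_sub_cancel]
    simp only [Nat.sub_zero, pow_zero, zero_mul, zero_add, one_mul, mul_one, mul_pow]
    rw [hchoose]
  · refine sum_congr rfl fun m hm => sum_congr rfl fun j hj => ?_
    rw [mem_Icc] at hm hj
    rw [show n - m + j - 1 - (n - m) = j - 1 by omega, show n - (n - m) = m by omega,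
      show n - (n - m + j - 1) - 1 = m - j by omega]
    ring
end

section
/- For every n ≥ 1, the identity F_n(13/2; q,r,s,t) = ∏_{i=1}^{n-1} (1 + r^{n-i} s^i) holds in ℤ[q,r,s,t] (in particular F_n(13/2) does not involve q or t). -/
/-
The RGF of a partition avoiding 13/2 is weakly increasing with steps of size at most one. By
induction along the word: while the prefix is weakly increasing its maximum is its last letter
`a_j`, so the RGF condition gives `a_{j+1} ≤ a_j + 1`; and `a_{j+1} < a_j` is impossible, since
the prefix climbs by steps of at most one from `1`, so by the discrete intermediate value theorem
`a_{j+1} = a_i` for some `i < j`, an occurrence of 13/2. Hence the avoiders of length `n` are the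
words whose letter at (0-based) position `j` is `1 + #{i ∈ S | i ≤ j}`, for `S ⊆ {1, …, n-1}` the
set of rises. In such a word `lb = rs = 0`, the letter `a_j` sees exactly `a_j - 1` smaller values
to its left and `max - a_j` bigger ones to its right, and summing over `j` gives
`ls = ∑_{i ∈ S} (n - i)` and `rb = ∑_{i ∈ S} i`. Summing `∏_{i ∈ S} r^{n-i} s^i` over all `S`
is the expansion of the product.
-/

open Finset

theorem Nat.exists_eq_of_forall_succ_le_add_one {g : ℕ → ℕ} {a b v : ℕ}
    (hstep : ∀ i, a ≤ i → i < b → g (i + 1) ≤ g i + 1) (hab : a ≤ b)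
    (hav : g a ≤ v) (hvb : v ≤ g b) : ∃ i, a ≤ i ∧ i ≤ b ∧ g i = v := by
  induction b, hab using Nat.le_induction with
  | base => exact ⟨a, le_rfl, le_rfl, by omega⟩
  | succ b hab ih =>
    by_cases hv : v ≤ g b
    · obtain ⟨i, hai, hib, hi⟩ := ih (fun i hai hib => hstep i hai (by omega)) hv
      exact ⟨i, hai, by omega, hi⟩
    · have := hstep b hab (by omega)
      exact ⟨b + 1, by omega, le_rfl, by omega⟩

theorem List.foldr_max_le_iff {l : List ℕ} {m : ℕ} :
    l.foldr max 0 ≤ m ↔ ∀ a ∈ l, a ≤ m := by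
  induction l <;> simp_all

section Words

variable {g : ℕ → ℕ} {n : ℕ}

theorem getD_map_range {j : ℕ} (h : j < n) : ((List.range n).map g).getD j 0 = g j := by
  simp [h]

theorem mem_take_map_range {j v : ℕ} :
    v ∈ ((List.range n).map g).take j ↔ ∃ i < min j n, g i = v := by
  simp [← List.map_take, List.take_range]

theorem mem_drop_map_range {j v : ℕ} :
    v ∈ ((List.range n).map g).drop j ↔ ∃ i, j ≤ i ∧ i < n ∧ g i = v := by
  simp only [← List.map_drop, List.range_eq_range', List.drop_range', List.mem_map,
    List.mem_range'_1]
  constructor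
  · rintro ⟨i, ⟨hji, hin⟩, rfl⟩
    exact ⟨i, by omega, by omega, rfl⟩
  · rintro ⟨i, hji, hin, rfl⟩
    exact ⟨i, ⟨by omega, by omega⟩, rfl⟩

theorem List.eq_map_range_getD (w : List ℕ) : w = (List.range w.length).map (w.getD · 0) := by
  refine List.ext_getElem (by simp) fun i hi _ => ?_
  simp [hi]

theorem containsPat_map_range_121_iff :
    ContainsPat ((List.range n).map g) [1, 2, 1] ↔
      ∃ i j k, i < j ∧ j < k ∧ k < n ∧ g i = g k ∧ g i ≠ g j := by
  have hget : ∀ x : Fin ((List.range n).map g).length, ((List.range n).map g).get x = g x := by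
    simp
  constructor
  · rintro ⟨f, hf, hiff⟩
    have h01 : f 0 < f 1 := hf (by decide)
    have h12 : f 1 < f 2 := hf (by decide)
    have e02 := (hiff 0 2).mpr rfl
    have e01 := (hiff 0 1).not.mpr (by decide)
    simp only [hget] at e02 e01
    exact ⟨f 0, f 1, f 2, h01, h12, by simpa using (f 2).isLt, e02, e01⟩
  · rintro ⟨i, j, k, hij, hjk, hkn, hik, hij'⟩
    have hlen : ((List.range n).map g).length = n := by simp
    refine ⟨![⟨i, by omega⟩, ⟨j, by omega⟩, ⟨k, by omega⟩], ?_, fun a b => ?_⟩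
    · refine Fin.strictMono_iff_lt_succ.mpr fun a => ?_
      fin_cases a <;> simp [Fin.lt_def, hij, hjk]
    · rw [hik] at hij'
      fin_cases a <;> fin_cases b <;> simp [hik, hij', Ne.symm hij']

end Words

section Statistics

variable {g : ℕ → ℕ} {n : ℕ}

theorem statLB_map_range_of_monotone (hg : Monotone g) : statLB ((List.range n).map g) = 0 := by
  refine sum_eq_zero fun j hj => card_eq_zero.mpr <| filter_eq_empty_iff.mpr ?_
  simp only [List.length_map, List.length_range, mem_range] at hj
  rintro v hv
  obtain ⟨i, hi, rfl⟩ := mem_take_map_range.mp (List.mem_toFinset.mp hv)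
  rw [getD_map_range hj, not_lt]
  exact hg (by omega)

theorem statRS_map_range_of_monotone (hg : Monotone g) : statRS ((List.range n).map g) = 0 := by
  refine sum_eq_zero fun j hj => card_eq_zero.mpr <| filter_eq_empty_iff.mpr ?_
  simp only [List.length_map, List.length_range, mem_range] at hj
  rintro v hv
  obtain ⟨i, hi, -, rfl⟩ := mem_drop_map_range.mp (List.mem_toFinset.mp hv)
  rw [getD_map_range hj, not_lt]
  exact hg (by omega)

theorem statLS_map_range (hg : Monotone g) (hstep : ∀ i, g (i + 1) ≤ g i + 1) :
    statLS ((List.range n).map g) = ∑ j ∈ range n, (g j - g 0) := by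
  refine sum_congr (by simp) fun j hj => ?_
  rw [mem_range] at hj
  rw [getD_map_range hj, ← Nat.card_Ico]
  congr 1
  ext v
  simp only [mem_filter, List.mem_toFinset, mem_take_map_range, mem_Ico]
  constructor
  · rintro ⟨⟨i, -, rfl⟩, hv⟩
    exact ⟨hg (Nat.zero_le i), hv⟩
  · rintro ⟨h0v, hvj⟩
    obtain ⟨i, -, hij, rfl⟩ :=
      Nat.exists_eq_of_forall_succ_le_add_one (fun i _ _ => hstep i) (Nat.zero_le j) h0v hvj.le
    exact ⟨⟨i, by grind, rfl⟩, hvj⟩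

theorem statRB_map_range (hg : Monotone g) (hstep : ∀ i, g (i + 1) ≤ g i + 1) :
    statRB ((List.range n).map g) = ∑ j ∈ range n, (g (n - 1) - g j) := by
  refine sum_congr (by simp) fun j hj => ?_
  rw [mem_range] at hj
  rw [getD_map_range hj, ← Nat.card_Ioc]
  congr 1
  ext v
  simp only [mem_filter, List.mem_toFinset, mem_drop_map_range, mem_Ioc]
  constructor
  · rintro ⟨⟨i, -, hin, rfl⟩, hv⟩
    exact ⟨hv, hg (by omega)⟩
  · rintro ⟨hjv, hvn⟩
    obtain ⟨i, hji, hin, rfl⟩ :=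
      Nat.exists_eq_of_forall_succ_le_add_one (fun i _ _ => hstep i) (by omega : j ≤ n - 1)
        hjv.le hvn
    exact ⟨⟨i, by grind, by omega, rfl⟩, hjv⟩

end Statistics

def stairs (S : Finset ℕ) (j : ℕ) : ℕ := #{i ∈ S | i ≤ j}

section Stairs

variable {S : Finset ℕ}

theorem stairs_succ (j : ℕ) : stairs S (j + 1) = stairs S j + if j + 1 ∈ S then 1 else 0 := by
  rw [stairs, stairs, card_filter, card_filter, ← sum_ite_eq' S (j + 1) (fun _ => 1),
    ← sum_add_distrib]
  refine sum_congr rfl fun i _ => ?_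
  split_ifs <;> omega

theorem stairs_succ_le (j : ℕ) : stairs S (j + 1) ≤ stairs S j + 1 := by
  rw [stairs_succ]
  split_ifs <;> omega

theorem monotone_stairs : Monotone (stairs S) :=
  fun _ _ h => card_le_card <| monotone_filter_right S fun _ _ hi => hi.trans h

theorem monotone_one_add_stairs : Monotone (1 + stairs S ·) :=
  fun _ _ h => Nat.add_le_add_left (monotone_stairs h) 1

theorem one_add_stairs_succ_le (j : ℕ) : 1 + stairs S (j + 1) ≤ 1 + stairs S j + 1 :=
  Nat.add_le_add_left (stairs_succ_le j) 1

theorem mem_iff_stairs_lt_stairs_succ {j : ℕ} :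
    j + 1 ∈ S ↔ stairs S j < stairs S (j + 1) := by
  rw [stairs_succ]
  split_ifs <;> simp_all

theorem stairs_zero (h : 0 ∉ S) : stairs S 0 = 0 := by
  simp [stairs, h]

theorem stairs_eq_card {j : ℕ} (h : ∀ i ∈ S, i ≤ j) : stairs S j = #S := by
  rw [stairs, filter_true_of_mem h]

theorem card_sub_stairs (j : ℕ) : #S - stairs S j = #{i ∈ S | j < i} := by
  rw [stairs, ← card_filter_add_card_filter_not (· ≤ j)]
  simp

theorem sum_range_stairs (n : ℕ) : ∑ j ∈ range n, stairs S j = ∑ i ∈ S, (n - i) := by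
  simp only [stairs, card_filter]
  rw [sum_comm]
  refine sum_congr rfl fun i _ => ?_
  rw [← card_filter, ← Nat.card_Ico]
  congr 1
  ext
  simp
  omega

theorem sum_range_card_filter_lt {n : ℕ} (hS : ∀ i ∈ S, i ≤ n) :
    ∑ j ∈ range n, #{i ∈ S | j < i} = ∑ i ∈ S, i := by
  simp only [card_filter]
  rw [sum_comm]
  refine sum_congr rfl fun i hi => ?_
  rw [← card_filter, ← card_range i]
  congr 1
  ext
  simp
  have := hS i hi
  omega

end Stairs

section Avoiders

variable {g : ℕ → ℕ} {n : ℕ}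

theorem map_range_mem_Rn_121 (hg0 : g 0 = 1) (hg : Monotone g)
    (hstep : ∀ i, g (i + 1) ≤ g i + 1) : (List.range n).map g ∈ Rn n [1, 2, 1] := by
  refine ⟨by simp, ⟨?_, fun hn => ?_, fun j hj => ?_⟩, ?_⟩
  · simp only [List.mem_map, List.mem_range]
    rintro _ ⟨i, -, rfl⟩
    exact hg0 ▸ hg (Nat.zero_le i)
  · rw [getD_map_range (by simpa using hn), hg0]
  · rw [List.length_map, List.length_range] at hj
    have hmax : g j ≤ ((List.range n).map g |>.take (j + 1)).foldr max 0 :=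
      List.foldr_max_le_iff.mp le_rfl _ (mem_take_map_range.mpr ⟨j, by omega, rfl⟩)
    rw [getD_map_range hj]
    linarith [hstep j]
  · rw [containsPat_map_range_121_iff]
    rintro ⟨i, j, k, hij, hjk, -, hik, hij'⟩
    exact hij' (le_antisymm (hg hij.le) (hik ▸ hg hjk.le))

theorem succ_le_add_one_of_isRGF_map_range (h : IsRGF ((List.range n).map g)) {j : ℕ}
    (hj : j + 1 < n) (hmax : ∀ i ≤ j, g i ≤ g j) : g (j + 1) ≤ g j + 1 := by
  have hrgf := h.2.2 j (by simpa using hj)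
  rw [getD_map_range hj] at hrgf
  have : ((List.range n).map g |>.take (j + 1)).foldr max 0 ≤ g j := by
    refine List.foldr_max_le_iff.mpr fun a ha => ?_
    obtain ⟨i, hi, rfl⟩ := mem_take_map_range.mp ha
    exact hmax i (by omega)
  omega

theorem le_succ_of_not_containsPat_121 (h : ¬ ContainsPat ((List.range n).map g) [1, 2, 1])
    {j : ℕ} (hj : j + 1 < n) (hlow : g 0 ≤ g (j + 1))
    (hstep : ∀ i < j, g (i + 1) ≤ g i + 1) :
    g j ≤ g (j + 1) := by
  by_contra! hlt
  obtain ⟨i, -, hij, hi⟩ :=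
    Nat.exists_eq_of_forall_succ_le_add_one (fun i _ hi => hstep i hi) (Nat.zero_le j) hlow hlt.le
  have hij : i < j := lt_of_le_of_ne hij (by rintro rfl; omega)
  exact h (containsPat_map_range_121_iff.mpr ⟨i, j, j + 1, hij, by omega, hj, hi, by omega⟩)

theorem map_range_zero_eq_one_of_isRGF (h : IsRGF ((List.range n).map g)) (hn : 0 < n) :
    g 0 = 1 := by
  have := h.2.1 (by simpa using hn)
  rwa [getD_map_range hn] at this

theorem map_range_step_of_mem_Rn_121 (h : (List.range n).map g ∈ Rn n [1, 2, 1]) {j : ℕ}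
    (hj : j + 1 < n) :
    g j ≤ g (j + 1) ∧ g (j + 1) ≤ g j + 1 := by
  obtain ⟨-, hrgf, havoid⟩ := h
  have hg0 := map_range_zero_eq_one_of_isRGF hrgf (by omega)
  have hpos : ∀ i < n, 1 ≤ g i := fun i hi =>
    hrgf.1 _ (List.mem_map_of_mem (List.mem_range.mpr hi))
  suffices key : ∀ j < n, (∀ i ≤ j, g i ≤ g j) ∧ ∀ i < j, g (i + 1) ≤ g i + 1 by
    obtain ⟨hmax, hstep⟩ := key (j + 1) hj
    exact ⟨hmax j (by omega), hstep j (by omega)⟩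
  intro j hj
  induction j with
  | zero => exact ⟨fun i hi => by rw [Nat.le_zero.mp hi], fun i hi => absurd hi (by omega)⟩
  | succ j ih =>
    obtain ⟨hmax, hstep⟩ := ih (by omega)
    have hup := succ_le_add_one_of_isRGF_map_range hrgf hj hmax
    have hdown := le_succ_of_not_containsPat_121 havoid hj (hg0 ▸ hpos _ hj) hstep
    refine ⟨fun i hi => ?_, fun i hi => ?_⟩
    · rcases Nat.lt_or_eq_of_le hi with hi | rfl
      · exact (hmax i (by omega)).trans hdown
      · exact le_rfl
    · rcases Nat.lt_or_eq_of_le (Nat.le_of_lt_succ hi) with hi | rfl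
      · exact hstep i hi
      · exact hup

end Avoiders

theorem exists_stairs_eq {g : ℕ → ℕ} {n : ℕ} (hg0 : 0 < n → g 0 = 1)
    (hstep : ∀ j, j + 1 < n → g j ≤ g (j + 1) ∧ g (j + 1) ≤ g j + 1) :
    ∃ S ⊆ Icc 1 (n - 1), ∀ j < n, g j = 1 + stairs S j := by
  refine ⟨{i ∈ Icc 1 (n - 1) | g (i - 1) < g i}, filter_subset _ _, fun j hj => ?_⟩
  induction j with
  | zero => rw [hg0 hj, stairs_zero (by simp)]
  | succ j ih =>
    rw [stairs_succ, ← add_assoc, ← ih (by omega)]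
    have := hstep j hj
    simp only [mem_filter, mem_Icc, Nat.add_sub_cancel]
    split_ifs <;> omega

def stairWord (S : Finset ℕ) (n : ℕ) : List ℕ := (List.range n).map (1 + stairs S ·)

theorem exists_stairWord_eq_of_mem_Rn_121 {n : ℕ} {w : List ℕ} (hw : w ∈ Rn n [1, 2, 1]) :
    ∃ S ⊆ Icc 1 (n - 1), stairWord S n = w := by
  set g : ℕ → ℕ := (w.getD · 0)
  have hw_eq : w = (List.range n).map g := hw.1 ▸ w.eq_map_range_getD
  rw [hw_eq] at hw ⊢
  obtain ⟨S, hS, hSg⟩ := exists_stairs_eq (map_range_zero_eq_one_of_isRGF hw.2.1)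
    fun j hj => map_range_step_of_mem_Rn_121 hw hj
  exact ⟨S, hS, List.map_congr_left fun j hj => (hSg j (List.mem_range.mp hj)).symm⟩

theorem stairWord_mem_Rn_121 {S : Finset ℕ} {n : ℕ} (hS : 0 ∉ S) :
    stairWord S n ∈ Rn n [1, 2, 1] :=
  map_range_mem_Rn_121 (by rw [stairs_zero hS]) monotone_one_add_stairs one_add_stairs_succ_le

theorem Rn_121_eq_image (n : ℕ) :
    Rn n [1, 2, 1] = ((Icc 1 (n - 1)).powerset.image (stairWord · n) : Set (List ℕ)) := by
  ext w
  simp only [coe_image, Set.mem_image, mem_coe, mem_powerset]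
  refine ⟨exists_stairWord_eq_of_mem_Rn_121, ?_⟩
  rintro ⟨S, hS, rfl⟩
  exact stairWord_mem_Rn_121 fun h0 => by simpa using hS h0

theorem stairWord_injOn (n : ℕ) :
    Set.InjOn (stairWord · n) ((Icc 1 (n - 1)).powerset : Set (Finset ℕ)) := by
  intro S hS T hT hST
  simp only [coe_powerset, Set.mem_preimage, Set.mem_powerset_iff, coe_subset] at hS hT
  have hstairs : ∀ j < n, stairs S j = stairs T j := fun j hj => by
    have := congrArg (·.getD j 0) hST
    dsimp only [stairWord] at this
    rw [getD_map_range hj, getD_map_range hj] at this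
    omega
  ext i
  by_cases hi : i ∈ Icc 1 (n - 1)
  · obtain ⟨j, rfl⟩ : ∃ j, i = j + 1 := ⟨i - 1, by simp at hi; omega⟩
    simp only [mem_Icc] at hi
    rw [mem_iff_stairs_lt_stairs_succ, mem_iff_stairs_lt_stairs_succ, hstairs j (by omega),
      hstairs (j + 1) (by omega)]
  · exact iff_of_false (fun h => hi (hS h)) (fun h => hi (hT h))

section StairWordStatistics

variable {S : Finset ℕ} {n : ℕ}

theorem statLB_stairWord : statLB (stairWord S n) = 0 :=
  statLB_map_range_of_monotone monotone_one_add_stairs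

theorem statRS_stairWord : statRS (stairWord S n) = 0 :=
  statRS_map_range_of_monotone monotone_one_add_stairs

theorem statLS_stairWord (hS : 0 ∉ S) : statLS (stairWord S n) = ∑ i ∈ S, (n - i) := by
  rw [stairWord, statLS_map_range monotone_one_add_stairs one_add_stairs_succ_le,
    ← sum_range_stairs]
  simp [stairs_zero hS]

theorem statRB_stairWord (hS : ∀ i ∈ S, i ≤ n - 1) :
    statRB (stairWord S n) = ∑ i ∈ S, i := by
  rw [stairWord, statRB_map_range monotone_one_add_stairs one_add_stairs_succ_le,
    stairs_eq_card hS,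
    ← sum_range_card_filter_lt fun i hi => (hS i hi).trans (Nat.sub_le n 1)]
  refine sum_congr rfl fun j _ => ?_
  rw [← card_sub_stairs]
  omega

end StairWordStatistics

open MvPolynomial in
theorem stmt11_general (n : ℕ) :
    Fgen n [1, 2, 1] =
      ∏ i ∈ Finset.Icc 1 (n - 1),
        (1 + (X 1 : MvPolynomial (Fin 4) ℤ) ^ (n - i) * X 2 ^ i) := by
  rw [Fgen, Rn_121_eq_image, finsum_mem_coe_finset, sum_image (stairWord_injOn n), prod_one_add]
  refine sum_congr rfl fun S hS => ?_
  have hS := mem_powerset.mp hS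
  rw [statLB_stairWord, statRS_stairWord, statLS_stairWord fun h0 => by simpa using hS h0,
    statRB_stairWord fun i hi => (mem_Icc.mp (hS hi)).2, prod_mul_distrib, prod_pow_eq_pow_sum,
    prod_pow_eq_pow_sum, pow_zero, pow_zero, one_mul, mul_one]

open MvPolynomial in
/-- `F_n(13/2;q,r,s,t) = ∏_{i=1}^{n-1} (1 + r^{n-i} s^i)`
(in particular it involves neither `q = X 0` nor `t = X 3`). -/
theorem stmt11 (n : ℕ) (hn : 1 ≤ n) :
    Fgen n [1, 2, 1] =
      ∏ i ∈ Finset.Icc 1 (n - 1),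
        (1 + (X 1 : MvPolynomial (Fin 4) ℤ) ^ (n - i) * X 2 ^ i) :=
  stmt11_general n
end
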